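/- arXiv:2408.06660 — 3 statements merged into one kernel-verified Lean document; each statement's English description precedes it below -/
import Mathlib

section
/- Let X and Y be metric spaces and let p : X → Y be a surjective map such that: (i) p is bornologous; (ii) for every S > 0 there exists C > 0 such that for every y ∈ Y, every x ∈ X with d_Y(p(x), y) ≤ S satisfies x ∈ Pen(p⁻¹({y}); C). Suppose Y = Y⁽⁰⁾ ∪ Y⁽¹⁾ and the pair (Y⁽⁰⁾, Y⁽¹⁾) is ω-excisive. Then X = p⁻¹(Y⁽⁰⁾) ∪ p⁻¹(Y⁽¹⁾) and the pair (p⁻¹(Y⁽⁰⁾), p⁻¹(Y⁽¹⁾)) is ω-excisive, i.e. for every R > 0 there exists C > 0 such that Pen(p⁻¹(Y⁽⁰⁾); R) ∩ Pen(p⁻¹(Y⁽¹⁾); R) ⊆ Pen(p⁻¹(Y⁽⁰⁾) ∩ p⁻¹(Y⁽¹⁾); C). -/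
/-- The open `R`-thickening (penumbra) of a set `A` in a metric space:
`Pen(A; R) = {x : d(x, A) < R}`. -/
def Pen {α : Type*} [MetricSpace α] (A : Set α) (R : ℝ) : Set α :=
  {x | ∃ a ∈ A, dist x a < R}

/-- If `p : X → Y` is a surjective bornologous map such that points mapping near a fiber
lie uniformly close to that fiber, then the preimage of an `ω`-excisive decomposition of `Y`
is an `ω`-excisive decomposition of `X`. -/
theorem omega_excisive_pullback {X Y : Type*} [MetricSpace X] [MetricSpace Y]
    (p : X → Y) (hsurj : Function.Surjective p)
    (hborn : ∀ R > (0 : ℝ), ∃ S > (0 : ℝ), ∀ x x' : X, dist x x' ≤ R → dist (p x) (p x') ≤ S)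
    (hfib : ∀ S > (0 : ℝ), ∃ C > (0 : ℝ), ∀ (y : Y) (x : X), dist (p x) y ≤ S →
      x ∈ Pen (p ⁻¹' {y}) C)
    (Y₀ Y₁ : Set Y) (hcover : Y₀ ∪ Y₁ = Set.univ)
    (hexc : ∀ R > (0 : ℝ), ∃ S > (0 : ℝ), Pen Y₀ R ∩ Pen Y₁ R ⊆ Pen (Y₀ ∩ Y₁) S) :
    p ⁻¹' Y₀ ∪ p ⁻¹' Y₁ = Set.univ ∧
    ∀ R > (0 : ℝ), ∃ C > (0 : ℝ),
      Pen (p ⁻¹' Y₀) R ∩ Pen (p ⁻¹' Y₁) R ⊆ Pen (p ⁻¹' Y₀ ∩ p ⁻¹' Y₁) C := by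
  constructor
  · rw [← Set.preimage_union, hcover, Set.preimage_univ]
  · intro R hR
    obtain ⟨S, hS, hSb⟩ := hborn R hR
    obtain ⟨T, hT, hTe⟩ := hexc (S + 1) (by linarith)
    obtain ⟨C, hC, hCf⟩ := hfib T hT
    refine ⟨C, hC, ?_⟩
    rintro x ⟨⟨x₀, hx₀, hd₀⟩, ⟨x₁, hx₁, hd₁⟩⟩
    have h₀ : p x ∈ Pen Y₀ (S + 1) :=
      ⟨p x₀, hx₀, lt_of_le_of_lt (hSb x x₀ hd₀.le) (by linarith)⟩
    have h₁ : p x ∈ Pen Y₁ (S + 1) :=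
      ⟨p x₁, hx₁, lt_of_le_of_lt (hSb x x₁ hd₁.le) (by linarith)⟩
    obtain ⟨y, hy, hdy⟩ := hTe ⟨h₀, h₁⟩
    obtain ⟨x', hx', hdx'⟩ := hCf y x hdy.le
    have hpx' : p x' = y := hx'
    exact ⟨x', ⟨by simp [Set.mem_preimage, hpx', hy.1],
      by simp [Set.mem_preimage, hpx', hy.2]⟩, hdx'⟩
end

section
/- Let Y be a metric space with a basepoint y₀ ∈ Y, and for each n ∈ ℕ set Y_n = {y ∈ Y : n³ − n ≤ d(y, y₀) ≤ (n+1)³ + (n+1)}; let Y⁽⁰⁾ = ⋃_{n even} Y_n and Y⁽¹⁾ = ⋃_{n odd} Y_n. Then the pair (Y⁽⁰⁾, Y⁽¹⁾) is ω-excisive: for every R > 0 there exists S > 0 such that Pen(Y⁽⁰⁾; R) ∩ Pen(Y⁽¹⁾; R) ⊆ Pen(Y⁽⁰⁾ ∩ Y⁽¹⁾; S). -/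
/-- The annulus `Y_n = {y : n³ − n ≤ d(y, y₀) ≤ (n+1)³ + (n+1)}` about the basepoint `y₀`. -/
def Yband {Y : Type*} [MetricSpace Y] (y₀ : Y) (n : ℕ) : Set Y :=
  {y | (n : ℝ) ^ 3 - n ≤ dist y y₀ ∧ dist y y₀ ≤ ((n : ℝ) + 1) ^ 3 + ((n : ℝ) + 1)}

lemma yband_down {Y : Type*} [MetricSpace Y] {y₀ a : Y} {n : ℕ}
    (h : a ∈ Yband y₀ (n + 1)) (hd : dist a y₀ ≤ ((n : ℝ) + 1) ^ 3 + ((n : ℝ) + 1)) :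
    a ∈ Yband y₀ n := by
  obtain ⟨h1, _⟩ := h
  have hn : (0 : ℝ) ≤ (n : ℝ) := Nat.cast_nonneg n
  push_cast at h1
  exact ⟨by nlinarith, hd⟩

lemma yband_up {Y : Type*} [MetricSpace Y] {y₀ a : Y} {n : ℕ}
    (h : a ∈ Yband y₀ n) (hd : ((n : ℝ) + 1) ^ 3 - ((n : ℝ) + 1) ≤ dist a y₀) :
    a ∈ Yband y₀ (n + 1) := by
  obtain ⟨_, h2⟩ := h
  have hn : (0 : ℝ) ≤ (n : ℝ) := Nat.cast_nonneg n
  refine ⟨by push_cast; linarith, by push_cast; nlinarith⟩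

lemma cube_sub_mono {u v : ℝ} (hu : 1 ≤ u) (huv : u ≤ v) : u ^ 3 - u ≤ v ^ 3 - v := by
  have h : 0 ≤ (v - u) * (u ^ 2 + u * v + v ^ 2 - 1) := by
    apply mul_nonneg (by linarith)
    nlinarith
  nlinarith [h]

lemma cube_add_mono {u v : ℝ} (hu : 0 ≤ u) (huv : u < v) : u ^ 3 + u < v ^ 3 + v := by
  have h : 0 ≤ (v - u) * (u ^ 2 + u * v + v ^ 2) := by
    apply mul_nonneg (by linarith)
    nlinarith
  nlinarith [h]

lemma y₀_mem_band01 {Y : Type*} [MetricSpace Y] (y₀ : Y) :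
    y₀ ∈ Yband y₀ 0 ∧ y₀ ∈ Yband y₀ 1 := by
  constructor <;> refine ⟨?_, ?_⟩ <;> simp [Yband, dist_self] <;> norm_num

/-- The pair `(Y⁽⁰⁾, Y⁽¹⁾)` formed by the even- and odd-indexed annuli is `ω`-excisive. -/
theorem yband_omega_excisive {Y : Type*} [MetricSpace Y] (y₀ : Y) :
    ∀ R > (0 : ℝ), ∃ S > (0 : ℝ),
      Pen (⋃ n ∈ {n : ℕ | Even n}, Yband y₀ n) R ∩ Pen (⋃ n ∈ {n : ℕ | Odd n}, Yband y₀ n) R ⊆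
        Pen ((⋃ n ∈ {n : ℕ | Even n}, Yband y₀ n) ∩ (⋃ n ∈ {n : ℕ | Odd n}, Yband y₀ n)) S := by
  intro R hR
  refine ⟨R + (R + 1) ^ 3 + (R + 1) + 1, by positivity, ?_⟩
  rintro x ⟨⟨a, haA, hxa⟩, ⟨b, hbB, hxb⟩⟩
  simp only [Set.mem_iUnion, Set.mem_setOf_eq, exists_prop] at haA hbB
  obtain ⟨m, hm, ham⟩ := haA
  obtain ⟨k, hk, hbk⟩ := hbB
  -- helper: a point in two bands of opposite parity is in the intersection
  have mk_mem : ∀ (c : Y) (i j : ℕ), Even i → Odd j → c ∈ Yband y₀ i → c ∈ Yband y₀ j →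
      dist x c < R + (R + 1) ^ 3 + (R + 1) + 1 →
      x ∈ Pen ((⋃ n ∈ {n : ℕ | Even n}, Yband y₀ n) ∩ (⋃ n ∈ {n : ℕ | Odd n}, Yband y₀ n))
        (R + (R + 1) ^ 3 + (R + 1) + 1) := by
    intro c i j hi hj hci hcj hd
    refine ⟨c, ⟨?_, ?_⟩, hd⟩ <;> simp only [Set.mem_iUnion, Set.mem_setOf_eq, exists_prop]
    · exact ⟨i, hi, hci⟩
    · exact ⟨j, hj, hcj⟩
  have hRS : R < R + (R + 1) ^ 3 + (R + 1) + 1 := by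
    nlinarith [pow_pos (by linarith : (0:ℝ) < R + 1) 3]
  -- Case m = 0 : a is automatically in Yband 1.
  rcases Nat.eq_zero_or_pos m with hm0 | hmpos
  · subst hm0
    have : a ∈ Yband y₀ 1 := yband_up ham (by norm_num)
    exact mk_mem a 0 1 Even.zero odd_one ham this (lt_trans hxa hRS)
  -- m ≥ 1 : write m = m' + 1
  obtain ⟨m', rfl⟩ : ∃ m', m = m' + 1 := ⟨m - 1, (Nat.succ_pred_eq_of_pos hmpos).symm⟩
  by_cases ha1 : dist a y₀ ≤ ((m' : ℝ) + 1) ^ 3 + ((m' : ℝ) + 1)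
  · have : a ∈ Yband y₀ m' := yband_down ham ha1
    exact mk_mem a (m' + 1) m' hm (Nat.not_even_iff_odd.mp (Nat.even_add_one.mp hm)) ham this
      (lt_trans hxa hRS)
  by_cases ha2 : ((m' : ℝ) + 1 + 1) ^ 3 - ((m' : ℝ) + 1 + 1) ≤ dist a y₀
  · have : a ∈ Yband y₀ (m' + 2) := yband_up ham (by push_cast; push_cast at ha2; linarith)
    exact mk_mem a (m' + 1) (m' + 2) hm (by simpa [Nat.odd_add_one, Nat.even_add_one] using hm)
      ham this (lt_trans hxa hRS)
  -- now a is in the interior of band m'+1; same analysis for b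
  have hkpos : 1 ≤ k := hk.pos
  obtain ⟨k', rfl⟩ : ∃ k', k = k' + 1 := ⟨k - 1, (Nat.succ_pred_eq_of_pos hkpos).symm⟩
  by_cases hb1 : dist b y₀ ≤ ((k' : ℝ) + 1) ^ 3 + ((k' : ℝ) + 1)
  · have : b ∈ Yband y₀ k' := yband_down hbk hb1
    exact mk_mem b k' (k' + 1) (Nat.not_odd_iff_even.mp (Nat.odd_add_one.mp hk)) hk this hbk (lt_trans hxb hRS)
  by_cases hb2 : ((k' : ℝ) + 1 + 1) ^ 3 - ((k' : ℝ) + 1 + 1) ≤ dist b y₀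
  · have : b ∈ Yband y₀ (k' + 2) := yband_up hbk (by push_cast; push_cast at hb2; linarith)
    exact mk_mem b (k' + 2) (k' + 1) (by simpa [Nat.even_add_one, Nat.odd_add_one] using hk)
      hk this hbk (lt_trans hxb hRS)
  -- both interior: gap argument
  push_neg at ha1 ha2 hb1 hb2
  have hab : dist a b < 2 * R := by
    calc dist a b ≤ dist a x + dist x b := dist_triangle a x b
    _ = dist x a + dist x b := by rw [dist_comm a x]
    _ < 2 * R := by linarith
  have habs : |dist a y₀ - dist b y₀| < 2 * R := lt_of_le_of_lt (abs_dist_sub_le a b y₀) hab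
  obtain ⟨habs1, habs2⟩ := abs_lt.mp habs
  have hmk : m' + 1 ≠ k' + 1 := by
    intro h
    rw [h] at hm
    exact (Nat.not_even_iff_odd.mpr hk) hm
  have hm'0 : (0 : ℝ) ≤ (m' : ℝ) := Nat.cast_nonneg m'
  have hk'0 : (0 : ℝ) ≤ (k' : ℝ) := Nat.cast_nonneg k'
  -- in either order, the max index is < R, so dist a y₀ is small
  have hax : dist x y₀ < R + (R + 1) ^ 3 + (R + 1) := by
    have key : ((m' : ℝ) + 2) ≤ R + 1 := by
      rcases lt_or_gt_of_ne hmk with hlt | hgt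
      · have hle : ((m' : ℝ) + 2) ≤ ((k' : ℝ) + 1) := by exact_mod_cast hlt
        have hmono := cube_sub_mono (by linarith : (1:ℝ) ≤ (m' : ℝ) + 2) hle
        -- dist b y₀ - dist a y₀ > 2(k'+1)
        have hgap : dist b y₀ - dist a y₀ > 2 * ((k' : ℝ) + 1) := by nlinarith
        linarith
      · have hle : ((k' : ℝ) + 2) ≤ ((m' : ℝ) + 1) := by exact_mod_cast hgt
        have hmono := cube_sub_mono (by linarith : (1:ℝ) ≤ (k' : ℝ) + 2) hle
        have hgap : dist a y₀ - dist b y₀ > 2 * ((m' : ℝ) + 1) := by nlinarith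
        linarith
    have hda : dist a y₀ ≤ ((m' : ℝ) + 2) ^ 3 + ((m' : ℝ) + 2) := by
      have := ham.2; push_cast at this; linarith
    have hmono : ((m' : ℝ) + 2) ^ 3 + ((m' : ℝ) + 2) ≤ (R + 1) ^ 3 + (R + 1) := by
      rcases eq_or_lt_of_le key with h | h
      · rw [h]
      · exact (cube_add_mono (by linarith) h).le
    calc dist x y₀ ≤ dist x a + dist a y₀ := dist_triangle x a y₀
      _ < R + ((R + 1) ^ 3 + (R + 1)) := by linarith
      _ = R + (R + 1) ^ 3 + (R + 1) := by ring
  obtain ⟨h0, h1⟩ := y₀_mem_band01 y₀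
  exact mk_mem y₀ 0 1 Even.zero odd_one h0 h1 (by linarith)
end

section
/- Let H be a complex inner product space. Equip ℝ × H with the initial topology τ determined by the family of functions consisting of (t, v) ↦ t² + ‖v‖² (with values in ℝ) together with, for each u ∈ H, the function (t, v) ↦ ⟨v, u⟩ (with values in ℂ); that is, τ is the coarsest topology making all of these functions continuous. Then for every v₀ ∈ H and every r > 0, the set B(v₀, r) = {(t, v) ∈ ℝ × H : t² + ‖v − v₀‖² < r²} is open in τ. -/
/-- The initial topology on `ℝ × H` determined by the function `(t, v) ↦ t² + ‖v‖²` together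
with the functions `(t, v) ↦ ⟨v, u⟩` for all `u ∈ H`. -/
noncomputable def tauRH (H : Type*) [NormedAddCommGroup H] [InnerProductSpace ℂ H] :
    TopologicalSpace (ℝ × H) :=
  TopologicalSpace.induced (fun p : ℝ × H => p.1 ^ 2 + ‖p.2‖ ^ 2)
      (inferInstance : TopologicalSpace ℝ) ⊓
    ⨅ u : H, TopologicalSpace.induced (fun p : ℝ × H => (inner ℂ p.2 u : ℂ))
      (inferInstance : TopologicalSpace ℂ)

/-! The ball is a sublevel set of `(t, v) ↦ t² + ‖v - v₀‖²`, and expanding the square,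
`t² + ‖v - v₀‖² = (t² + ‖v‖²) - 2 Re ⟨v, v₀⟩ + ‖v₀‖²`, writes this function in terms of
two of the maps defining `tauRH H`. -/

namespace TauRH

variable {H : Type*} [NormedAddCommGroup H] [InnerProductSpace ℂ H]

theorem continuous_sq_add_norm_sq :
    @Continuous _ _ (tauRH H) _ fun p : ℝ × H => p.1 ^ 2 + ‖p.2‖ ^ 2 :=
  continuous_iff_le_induced.mpr inf_le_left

theorem continuous_inner_left (u : H) :
    @Continuous _ _ (tauRH H) _ fun p : ℝ × H => inner ℂ p.2 u :=
  continuous_iff_le_induced.mpr (inf_le_right.trans (iInf_le _ u))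

theorem continuous_sq_add_norm_sub_sq (v₀ : H) :
    @Continuous _ _ (tauRH H) _ fun p : ℝ × H => p.1 ^ 2 + ‖p.2 - v₀‖ ^ 2 := by
  let := tauRH H
  have expand : (fun p : ℝ × H => p.1 ^ 2 + ‖p.2 - v₀‖ ^ 2) =
      fun p => (p.1 ^ 2 + ‖p.2‖ ^ 2) - 2 * RCLike.re (inner ℂ p.2 v₀) + ‖v₀‖ ^ 2 := by
    funext p
    rw [@norm_sub_sq ℂ]
    ring
  rw [expand]
  exact (continuous_sq_add_norm_sq.sub
    (continuous_const.mul (RCLike.continuous_re.comp (continuous_inner_left v₀)))).add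
    continuous_const

end TauRH

theorem ball_isOpen_tauRH_general {H : Type*} [NormedAddCommGroup H] [InnerProductSpace ℂ H]
    (v₀ : H) (r : ℝ) :
    @IsOpen (ℝ × H) (tauRH H) {p : ℝ × H | p.1 ^ 2 + ‖p.2 - v₀‖ ^ 2 < r ^ 2} :=
  @IsOpen.preimage _ _ (tauRH H) _ _ (TauRH.continuous_sq_add_norm_sub_sq v₀) _ isOpen_Iio

/-- For every `v₀ ∈ H` and `r > 0`, the set `{(t, v) : t² + ‖v − v₀‖² < r²}` is open in the
initial topology `tauRH H`. -/
theorem ball_isOpen_tauRH {H : Type*} [NormedAddCommGroup H] [InnerProductSpace ℂ H]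
    (v₀ : H) (r : ℝ) (hr : 0 < r) :
    @IsOpen (ℝ × H) (tauRH H) {p : ℝ × H | p.1 ^ 2 + ‖p.2 - v₀‖ ^ 2 < r ^ 2} :=
  ball_isOpen_tauRH_general v₀ r
end
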